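/- The unique solution X ∈ ℚ[[t]] of the functional equation X = 𝒰(t)·X + (1/2)·[ℰ₁(t)² + ℰ₁(t²)] + (ℰ₁(t)/2)·[(𝒰(t)·(1 − 𝒰(t))⁻¹)² + 𝒰(t²)·(1 − 𝒰(t²))⁻¹] + 𝒰(t)²·ℰ₁(t)·(1 − 𝒰(t))⁻³ is X = (1/2)·(1 − 𝒰(t))⁻¹·[ℰ₁(t)² + ℰ₁(t²)] + (1/2)·𝒰(t)²·ℰ₁(t)·(1 − 𝒰(t))⁻³ + (1/2)·𝒰(t²)·ℰ₁(t)·(1 − 𝒰(t))⁻¹·(1 − 𝒰(t²))⁻¹ + ℰ₁(t)·𝒰(t)²·(1 − 𝒰(t))⁻⁴; this X is the ordinary generating function ℰ₂ of unlabeled time-consistent galled trees with exactly two galls. -/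

import Mathlib

open PowerSeries

/-- `substSq F` is the formal power series `F(t²)` obtained from `F ∈ ℚ[[t]]` by
substituting `t²` for `t`. -/
noncomputable def substSq (F : PowerSeries ℚ) : PowerSeries ℚ :=
  PowerSeries.mk fun n => if 2 ∣ n then PowerSeries.coeff (R := ℚ) (n / 2) F else 0

theorem PowerSeries.eq_mul_add_iff_eq_inv_one_sub_mul {k : Type*} [Field k] {U X R : k⟦X⟧}
    (hU : constantCoeff U = 0) : X = U * X + R ↔ X = (1 - U)⁻¹ * R := by
  rw [mul_comm (1 - U)⁻¹, eq_mul_inv_iff_mul_eq (by simp [hU])]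
  constructor <;> intro h <;> linear_combination h

theorem stmt_16_general (U E1 : PowerSeries ℚ) (h0 : constantCoeff (R := ℚ) U = 0) :
    ∀ X : PowerSeries ℚ,
      X = U * X + (1 / 2 : ℚ) • (E1 ^ 2 + substSq E1)
          + ((1 / 2 : ℚ) • E1) *
              ((U * (1 - U)⁻¹) ^ 2 + substSq U * (1 - substSq U)⁻¹)
          + U ^ 2 * E1 * ((1 - U)⁻¹) ^ 3 ↔
      X = (1 / 2 : ℚ) • ((1 - U)⁻¹ * (E1 ^ 2 + substSq E1))
          + (1 / 2 : ℚ) • (U ^ 2 * E1 * ((1 - U)⁻¹) ^ 3)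
          + (1 / 2 : ℚ) • (substSq U * E1 * (1 - U)⁻¹ * (1 - substSq U)⁻¹)
          + E1 * U ^ 2 * ((1 - U)⁻¹) ^ 4 := by
  intro X
  simp only [add_assoc, eq_mul_add_iff_eq_inv_one_sub_mul h0]
  convert Iff.rfl using 2
  simp only [smul_eq_C_mul]
  ring

/-- The unique solution `X ∈ ℚ[[t]]` of the functional equation
`X = 𝒰(t)·X + (1/2)·[ℰ₁(t)² + ℰ₁(t²)] + (ℰ₁(t)/2)·[(𝒰(t)·(1-𝒰(t))⁻¹)² + 𝒰(t²)·(1-𝒰(t²))⁻¹]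
   + 𝒰(t)²·ℰ₁(t)·(1-𝒰(t))⁻³`
is
`X = (1/2)·(1-𝒰(t))⁻¹·[ℰ₁(t)² + ℰ₁(t²)] + (1/2)·𝒰(t)²·ℰ₁(t)·(1-𝒰(t))⁻³
   + (1/2)·𝒰(t²)·ℰ₁(t)·(1-𝒰(t))⁻¹·(1-𝒰(t²))⁻¹ + ℰ₁(t)·𝒰(t)²·(1-𝒰(t))⁻⁴`,
the OGF `ℰ₂` of unlabeled time-consistent galled trees with exactly two galls.  Here
`𝒰` is the unique series with zero constant coefficient satisfying
`𝒰(t) = t + (1/2)·[𝒰(t)² + 𝒰(t²)]` and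
`ℰ₁ = (1/2)·𝒰(t)³·(1-𝒰(t))⁻³ + (1/2)·𝒰(t)·𝒰(t²)·(1-𝒰(t))⁻¹·(1-𝒰(t²))⁻¹`. -/
theorem stmt_16 (U E1 : PowerSeries ℚ) (h0 : constantCoeff (R := ℚ) U = 0)
    (hU : U = PowerSeries.X + (1 / 2 : ℚ) • (U ^ 2 + substSq U))
    (hE1 : E1 = (1 / 2 : ℚ) • (U ^ 3 * ((1 - U)⁻¹) ^ 3)
        + (1 / 2 : ℚ) • (U * substSq U * (1 - U)⁻¹ * (1 - substSq U)⁻¹)) :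
    ∀ X : PowerSeries ℚ,
      X = U * X + (1 / 2 : ℚ) • (E1 ^ 2 + substSq E1)
          + ((1 / 2 : ℚ) • E1) *
              ((U * (1 - U)⁻¹) ^ 2 + substSq U * (1 - substSq U)⁻¹)
          + U ^ 2 * E1 * ((1 - U)⁻¹) ^ 3 ↔
      X = (1 / 2 : ℚ) • ((1 - U)⁻¹ * (E1 ^ 2 + substSq E1))
          + (1 / 2 : ℚ) • (U ^ 2 * E1 * ((1 - U)⁻¹) ^ 3)
          + (1 / 2 : ℚ) • (substSq U * E1 * (1 - U)⁻¹ * (1 - substSq U)⁻¹)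
          + E1 * U ^ 2 * ((1 - U)⁻¹) ^ 4 :=
  stmt_16_general U E1 h0
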